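/- Let A be a quantifier-free symbolic heap and B = ∃z⃗. Q with z⃗ disjoint from the variables of A and no variable of z⃗ occurring on the right-hand side of a points-to formula in Q. Then A ⊨ B (every stack-heap pair satisfying A satisfies B) if and only if the arithmetic sentence ∀x⃗. ¬χ(A,B) is true over ℕ, where x⃗ lists all free variables of A and B. -/

import Mathlib

/-! ## Array separation logic (ASL): syntax and stack-heap semantics -/

/-- Terms of array separation logic: variables (named by naturals), constants,
addition, and multiplication by a constant. -/
inductive Trm : Type where
  | var : ℕ → Trm
  | const : ℕ → Trm
  | add : Trm → Trm → Trm
  | smul : ℕ → Trm → Trm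

/-- A stack maps variables to naturals. -/
abbrev Stack := ℕ → ℕ

/-- Evaluation of terms under a stack. -/
def Trm.eval (s : Stack) : Trm → ℕ
  | .var x => s x
  | .const n => n
  | .add t u => t.eval s + u.eval s
  | .smul n t => n * t.eval s

/-- Variables occurring in a term. -/
def Trm.vars : Trm → Set ℕ
  | .var x => {x}
  | .const _ => ∅
  | .add t u => t.vars ∪ u.vars
  | .smul _ t => t.vars

/-- Pure formulas: conjunctions of atomic arithmetic constraints. -/
inductive PureF : Type where
  | tru : PureF
  | eq : Trm → Trm → PureF
  | ne : Trm → Trm → PureF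
  | le : Trm → Trm → PureF
  | lt : Trm → Trm → PureF
  | and : PureF → PureF → PureF

/-- Satisfaction of pure formulas (depends only on the stack). -/
def PureF.sat (s : Stack) : PureF → Prop
  | .tru => True
  | .eq t u => t.eval s = u.eval s
  | .ne t u => t.eval s ≠ u.eval s
  | .le t u => t.eval s ≤ u.eval s
  | .lt t u => t.eval s < u.eval s
  | .and p q => p.sat s ∧ q.sat s

def PureF.vars : PureF → Set ℕ
  | .tru => ∅
  | .eq t u => t.vars ∪ u.vars
  | .ne t u => t.vars ∪ u.vars
  | .le t u => t.vars ∪ u.vars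
  | .lt t u => t.vars ∪ u.vars
  | .and p q => p.vars ∪ q.vars

/-- The (top-level) terms occurring in a pure formula. -/
def PureF.trms : PureF → List Trm
  | .tru => []
  | .eq t u => [t, u]
  | .ne t u => [t, u]
  | .le t u => [t, u]
  | .lt t u => [t, u]
  | .and p q => p.trms ++ q.trms

/-- The conjuncts of a pure formula. -/
def PureF.conjuncts : PureF → List PureF
  | .and p q => p.conjuncts ++ q.conjuncts
  | p => [p]

/-- Finite conjunction. -/
def bigAnd : List PureF → PureF
  | [] => .tru
  | p :: ps => .and p (bigAnd ps)

/-- Spatial formulas: `emp`, points-to, arrays, and separating conjunction. -/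
inductive Spatial : Type where
  | emp : Spatial
  | pto : Trm → Trm → Spatial
  | arr : Trm → Trm → Spatial
  | star : Spatial → Spatial → Spatial

/-- Heaps: finite partial functions from ℕ (locations) to ℕ (values). -/
abbrev Heap := Finmap (fun _ : ℕ => ℕ)

/-- Satisfaction of spatial formulas. -/
def Spatial.sat (s : Stack) : Spatial → Heap → Prop
  | .emp, h => h = ∅
  | .pto t u, h =>
      h.keys = {Trm.eval s t} ∧ Finmap.lookup (Trm.eval s t) h = some (Trm.eval s u)
  | .arr t u, h =>
      Trm.eval s t ≤ Trm.eval s u ∧ h.keys = Finset.Icc (Trm.eval s t) (Trm.eval s u)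
  | .star F G, h =>
      ∃ h₁ h₂ : Heap, h₁.Disjoint h₂ ∧ h = h₁ ∪ h₂ ∧ F.sat s h₁ ∧ G.sat s h₂

def Spatial.vars : Spatial → Set ℕ
  | .emp => ∅
  | .pto t u => t.vars ∪ u.vars
  | .arr t u => t.vars ∪ u.vars
  | .star F G => F.vars ∪ G.vars

/-- The (top-level) terms occurring in a spatial formula. -/
def Spatial.trms : Spatial → List Trm
  | .emp => []
  | .pto t u => [t, u]
  | .arr t u => [t, u]
  | .star F G => F.trms ++ G.trms

/-- The points-to atoms of a spatial formula, as (address, value) pairs. -/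
def Spatial.ptos : Spatial → List (Trm × Trm)
  | .emp => []
  | .pto t u => [(t, u)]
  | .arr _ _ => []
  | .star F G => F.ptos ++ G.ptos

/-- The array atoms of a spatial formula, as endpoint pairs. -/
def Spatial.arrs : Spatial → List (Trm × Trm)
  | .emp => []
  | .pto _ _ => []
  | .arr t u => [(t, u)]
  | .star F G => F.arrs ++ G.arrs

/-- The arrays of the array abstraction `⟨A⟩`: each points-to `c ↦ d` is
replaced by the single-cell array `array(c,c)`. -/
def Spatial.absArrays : Spatial → List (Trm × Trm)
  | .emp => []
  | .pto t _ => [(t, t)]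
  | .arr t u => [(t, u)]
  | .star F G => F.absArrays ++ G.absArrays

/-- Finite separating conjunction. -/
def bigStar : List Spatial → Spatial
  | [] => .emp
  | F :: Fs => .star F (bigStar Fs)

/-- Quantifier-free symbolic heaps `Π : F`. -/
structure SymHeap : Type where
  pure : PureF
  spatial : Spatial

/-- Satisfaction of quantifier-free symbolic heaps. -/
def SymHeap.sat (s : Stack) (h : Heap) (A : SymHeap) : Prop :=
  A.pure.sat s ∧ A.spatial.sat s h

def SymHeap.vars (A : SymHeap) : Set ℕ := A.pure.vars ∪ A.spatial.vars

/-- All (top-level) terms occurring in a symbolic heap. -/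
def SymHeap.trms (A : SymHeap) : List Trm := A.pure.trms ++ A.spatial.trms

/-- Lifting `*` to symbolic heaps: conjoin pure parts, `*`-conjoin spatial parts. -/
def SymHeap.star (A X : SymHeap) : SymHeap :=
  ⟨.and A.pure X.pure, .star A.spatial X.spatial⟩

/-- Satisfiability of a symbolic heap. -/
def SymHeap.Satisfiable (A : SymHeap) : Prop := ∃ (s : Stack) (h : Heap), A.sat s h

/-- Semantic entailment between quantifier-free symbolic heaps. -/
def Entails (A B : SymHeap) : Prop := ∀ (s : Stack) (h : Heap), A.sat s h → B.sat s h

/-- Existentially quantified symbolic heaps `∃ z⃗. Π : F`. -/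
structure QSymHeap : Type where
  bound : List ℕ
  body : SymHeap

/-- Satisfaction of quantified symbolic heaps: some extension of the stack on the
bound variables satisfies the body. -/
def QSymHeap.sat (s : Stack) (h : Heap) (B : QSymHeap) : Prop :=
  ∃ s' : Stack, (∀ x : ℕ, x ∉ B.bound → s' x = s x) ∧ B.body.sat s' h

/-! ## The arithmetic encodings γ, β, φ, ψ₁, ψ₂, χ (interpreted over stacks) -/

/-- `s ⊨ γ(A)`: the Presburger satisfiability encoding of `A`, i.e. the pure part
of `A` together with well-definedness and pairwise disjointness of the arrays of
the array abstraction `⟨A⟩`. -/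
def gammaSat (A : SymHeap) (s : Stack) : Prop :=
  A.pure.sat s ∧
  (∀ p ∈ A.spatial.absArrays, Trm.eval s p.1 ≤ Trm.eval s p.2) ∧
  A.spatial.absArrays.Pairwise (fun p q =>
    Trm.eval s p.2 < Trm.eval s q.1 ∨ Trm.eval s q.2 < Trm.eval s p.1)

/-- `s ⊨ β(A,B)`. -/
def betaSat (A B : SymHeap) (s : Stack) : Prop :=
  gammaSat A s ∧ gammaSat B s ∧
  (∀ p ∈ B.spatial.ptos, ∀ q ∈ A.spatial.arrs,
      Trm.eval s p.1 < Trm.eval s q.1 ∨ Trm.eval s p.1 > Trm.eval s q.2) ∧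
  (∀ p ∈ A.spatial.ptos, ∀ q ∈ B.spatial.ptos,
      Trm.eval s p.1 ≠ Trm.eval s q.1 ∨ Trm.eval s p.2 = Trm.eval s q.2)

/-- The term set `Terms(A,B)`: all terms occurring in `A` and `B`, together with
the successor terms `b_i + 1`, `d_i + 1` (array right endpoints) and
`t_i + 1`, `v_i + 1` (points-to addresses). -/
def termSet (A B : SymHeap) : List Trm :=
  A.trms ++ B.trms ++
  (A.spatial.arrs.map fun p => Trm.add p.2 (Trm.const 1)) ++
  (B.spatial.arrs.map fun p => Trm.add p.2 (Trm.const 1)) ++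
  (A.spatial.ptos.map fun p => Trm.add p.1 (Trm.const 1)) ++
  (B.spatial.ptos.map fun p => Trm.add p.1 (Trm.const 1))

/-- A solution seed for the biabduction instance `(A,B)`. -/
def IsSolutionSeed (A B : SymHeap) (Δ : PureF) : Prop :=
  (∃ s : Stack, Δ.sat s) ∧
  (∀ s : Stack, Δ.sat s → betaSat A B s) ∧
  (∀ δ ∈ Δ.conjuncts, ∃ t ∈ termSet A B, ∃ u ∈ termSet A B,
      δ = PureF.lt t u ∨ δ = PureF.eq t u) ∧
  (∀ t ∈ termSet A B, ∀ u ∈ termSet A B, ∃ δ ∈ Δ.conjuncts,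
      δ = PureF.lt t u ∨ δ = PureF.lt u t ∨ δ = PureF.eq t u)

/-- The (quantifier-free) biabduction problem `(A,B)` has a solution. -/
def HasBiabductionSolution (A B : SymHeap) : Prop :=
  ∃ X Y : SymHeap, (A.star X).Satisfiable ∧ Entails (A.star X) (B.star Y)

/-- `s ⊨ φ(A,B)` (over the array abstractions of `A` and `B`). -/
def phiSat (A B : SymHeap) (s : Stack) : Prop :=
  ∃ x : ℕ,
    (∃ p ∈ A.spatial.absArrays, Trm.eval s p.1 ≤ x ∧ x ≤ Trm.eval s p.2) ∧
    ∀ q ∈ B.spatial.absArrays, x < Trm.eval s q.1 ∨ x > Trm.eval s q.2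

/-- `s ⊨ ψ₁(A,B)`: some points-to address of `B` is covered by an array of `A`. -/
def psi1Sat (A B : SymHeap) (s : Stack) : Prop :=
  ∃ p ∈ A.spatial.arrs, ∃ q ∈ B.spatial.ptos,
    Trm.eval s p.1 ≤ Trm.eval s q.1 ∧ Trm.eval s q.1 ≤ Trm.eval s p.2

/-- `s ⊨ ψ₂(A,B)`: some pointers of `A` and `B` share an address but disagree on
their contents. -/
def psi2Sat (A B : SymHeap) (s : Stack) : Prop :=
  ∃ p ∈ A.spatial.ptos, ∃ q ∈ B.spatial.ptos,
    Trm.eval s p.1 = Trm.eval s q.1 ∧ Trm.eval s p.2 ≠ Trm.eval s q.2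

/-- `s ⊨ χ(A, ∃z⃗.Q)`. -/
def chiSat (A : SymHeap) (zs : List ℕ) (Q : SymHeap) (s : Stack) : Prop :=
  gammaSat A s ∧
  ∀ s' : Stack, (∀ x : ℕ, x ∉ zs → s' x = s x) →
    (¬ gammaSat Q s' ∨ phiSat A Q s' ∨ phiSat Q A s' ∨
      psi1Sat A Q s' ∨ psi2Sat A Q s')

/-!
A model `(s, h)` of a quantifier-free symbolic heap is determined by `s` except for the contents
of array cells: its domain is the union of the intervals of the array abstraction, which `γ`
makes well defined and pairwise disjoint, and the only cells with prescribed contents are the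
points-to addresses. So a model of `A` is a model of `Q` under some choice of `z⃗` as soon as
`Q` is consistent, the two footprints coincide (no `φ`), and every points-to of `Q` lands on a
points-to of `A` with the same contents (no `ψ₁`, `ψ₂`). Conversely, to refute the entailment
in the `ψ₁` case, fill the array cells of `A` with a value larger than every points-to content
of `Q`: since those contents do not mention `z⃗`, no choice of `z⃗` matches it.
-/

namespace Finmap

variable {α : Type*} {β : α → Type*}

theorem disjoint_iff_disjoint_keys {h₁ h₂ : Finmap β} :
    h₁.Disjoint h₂ ↔ _root_.Disjoint h₁.keys h₂.keys := by
  simp only [Finmap.Disjoint, Finset.disjoint_left, mem_keys]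

variable [DecidableEq α]

theorem keys_eq_empty_iff {h : Finmap β} : h.keys = ∅ ↔ h = ∅ := by
  refine ⟨fun hk => ext_lookup fun a => ?_, fun h => h ▸ keys_empty⟩
  rw [lookup_empty, lookup_eq_none, ← mem_keys, hk]
  exact Finset.notMem_empty a

def ofFinset (K : Finset α) (f : ∀ a, β a) : Finmap β :=
  keysLookupEquiv.symm ⟨(K, fun a => if a ∈ K then some (f a) else none), fun a => by
    by_cases ha : a ∈ K <;> simp [ha]⟩

@[simp]
theorem keys_ofFinset (K : Finset α) (f : ∀ a, β a) : (ofFinset K f).keys = K := by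
  simp [ofFinset]

theorem lookup_ofFinset_of_mem {K : Finset α} (f : ∀ a, β a) {a : α} (ha : a ∈ K) :
    (ofFinset K f).lookup a = some (f a) := by
  simp [ofFinset, ha]

def restrict (K : Finset α) (h : Finmap β) : Finmap β :=
  keysLookupEquiv.symm ⟨(K ∩ h.keys, fun a => if a ∈ K then h.lookup a else none), fun a => by
    by_cases ha : a ∈ K <;> simp [ha, lookup_isSome, mem_keys]⟩

@[simp]
theorem keys_restrict (K : Finset α) (h : Finmap β) : (h.restrict K).keys = K ∩ h.keys := by
  simp [restrict]

@[simp]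
theorem lookup_restrict (K : Finset α) (h : Finmap β) (a : α) :
    (h.restrict K).lookup a = if a ∈ K then h.lookup a else none := by
  simp [restrict]

theorem restrict_union_restrict {K₁ K₂ : Finset α} {h : Finmap β} (hK : h.keys ⊆ K₁ ∪ K₂) :
    h.restrict K₁ ∪ h.restrict K₂ = h := by
  refine ext_lookup fun a => ?_
  have hmem : a ∈ h.restrict K₁ ↔ a ∈ K₁ ∧ a ∈ h := by
    rw [← mem_keys, keys_restrict, Finset.mem_inter, mem_keys]
  by_cases ha₁ : a ∈ h.restrict K₁
  · rw [lookup_union_left ha₁, lookup_restrict, if_pos (hmem.1 ha₁).1]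
  · rw [lookup_union_right ha₁, lookup_restrict]
    split_ifs with ha₂
    · rfl
    · refine (lookup_eq_none.2 fun ha => ha₁ (hmem.2 ⟨?_, ha⟩)).symm
      exact (Finset.mem_union.1 (hK (mem_keys.2 ha))).resolve_right ha₂

end Finmap

theorem Trm.eval_congr {s s' : Stack} {t : Trm} (ht : ∀ x ∈ t.vars, s' x = s x) :
    t.eval s' = t.eval s := by
  induction t with
  | var x => exact ht x rfl
  | const => rfl
  | add t u iht ihu =>
    simp only [Trm.vars, Set.mem_union] at ht
    simp only [Trm.eval, iht fun x hx => ht x (.inl hx), ihu fun x hx => ht x (.inr hx)]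
  | smul n t ih => simp only [Trm.eval, ih ht]

theorem Spatial.sat_congr {s s' : Stack} {F : Spatial} (hF : ∀ x ∈ F.vars, s' x = s x)
    {h : Heap} : F.sat s' h ↔ F.sat s h := by
  induction F generalizing h with
  | emp => rfl
  | pto t u | arr t u =>
    simp only [Spatial.vars, Set.mem_union] at hF
    simp only [Spatial.sat]
    rw [Trm.eval_congr (t := t) fun x hx => hF x (.inl hx),
      Trm.eval_congr (t := u) fun x hx => hF x (.inr hx)]
  | star F G ihF ihG =>
    simp only [Spatial.vars, Set.mem_union] at hF
    simp only [Spatial.sat, ihF fun x hx => hF x (.inl hx), ihG fun x hx => hF x (.inr hx)]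

theorem Spatial.eval_congr_of_mem_arrs {s s' : Stack} {F : Spatial}
    (hF : ∀ x ∈ F.vars, s' x = s x) {p : Trm × Trm} (hp : p ∈ F.arrs) :
    p.1.eval s' = p.1.eval s ∧ p.2.eval s' = p.2.eval s := by
  induction F with
  | emp | pto => simp [Spatial.arrs] at hp
  | arr t u =>
    simp only [Spatial.arrs, List.mem_singleton] at hp
    simp only [Spatial.vars, Set.mem_union] at hF
    subst hp
    exact ⟨Trm.eval_congr fun x hx => hF x (.inl hx), Trm.eval_congr fun x hx => hF x (.inr hx)⟩
  | star F G ihF ihG =>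
    simp only [Spatial.vars, Set.mem_union] at hF
    simp only [Spatial.arrs, List.mem_append] at hp
    exact hp.elim (ihF fun x hx => hF x (.inl hx)) (ihG fun x hx => hF x (.inr hx))

theorem Spatial.absArrays_perm (F : Spatial) :
    F.absArrays.Perm (F.arrs ++ F.ptos.map fun p => (p.1, p.1)) := by
  induction F with
  | emp | pto | arr => simp [Spatial.absArrays, Spatial.arrs, Spatial.ptos]
  | star F G ihF ihG =>
    simp only [Spatial.absArrays, Spatial.arrs, Spatial.ptos, List.map_append, List.append_assoc]
    exact (ihF.append ihG).trans (by
      simpa only [List.append_assoc] using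
        (List.perm_append_comm_assoc _ _ _).append_left F.arrs)

theorem Spatial.mem_absArrays {F : Spatial} {e : Trm × Trm} :
    e ∈ F.absArrays ↔ e ∈ F.arrs ∨ ∃ r ∈ F.ptos, (r.1, r.1) = e := by
  rw [F.absArrays_perm.mem_iff, List.mem_append, List.mem_map]

def footprint (s : Stack) : List (Trm × Trm) → Finset ℕ
  | [] => ∅
  | p :: l => Finset.Icc (p.1.eval s) (p.2.eval s) ∪ footprint s l

section Footprint

variable {s : Stack}

theorem mem_footprint {l : List (Trm × Trm)} {k : ℕ} :
    k ∈ footprint s l ↔ ∃ p ∈ l, p.1.eval s ≤ k ∧ k ≤ p.2.eval s := by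
  induction l with
  | nil => simp [footprint]
  | cons p l ih => simp [footprint, ih, Finset.mem_Icc]

theorem footprint_append (l₁ l₂ : List (Trm × Trm)) :
    footprint s (l₁ ++ l₂) = footprint s l₁ ∪ footprint s l₂ := by
  induction l₁ with
  | nil => simp [footprint]
  | cons p l ih => simp [footprint, ih, Finset.union_assoc]

theorem Spatial.addr_mem_footprint {F : Spatial} {r : Trm × Trm} (hr : r ∈ F.ptos) :
    r.1.eval s ∈ footprint s F.absArrays :=
  mem_footprint.2 ⟨(r.1, r.1), Spatial.mem_absArrays.2 (.inr ⟨r, hr, rfl⟩), le_rfl, le_rfl⟩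

theorem phiSat_iff {A B : SymHeap} :
    phiSat A B s ↔ ¬ footprint s A.spatial.absArrays ⊆ footprint s B.spatial.absArrays := by
  simp only [phiSat, Finset.not_subset, mem_footprint, not_exists, not_and, not_le]
  refine exists_congr fun x => and_congr_right fun _ => forall₂_congr fun q _ => ?_
  omega

end Footprint

def ArrDisjoint (s : Stack) (p q : Trm × Trm) : Prop :=
  p.2.eval s < q.1.eval s ∨ q.2.eval s < p.1.eval s

def WellFormed (s : Stack) (l : List (Trm × Trm)) : Prop :=
  (∀ p ∈ l, p.1.eval s ≤ p.2.eval s) ∧ l.Pairwise (ArrDisjoint s)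

section WellFormed

variable {s : Stack}

theorem ArrDisjoint.symm {p q : Trm × Trm} (h : ArrDisjoint s p q) : ArrDisjoint s q p :=
  Or.symm h

theorem wellFormed_append {l₁ l₂ : List (Trm × Trm)} :
    WellFormed s (l₁ ++ l₂) ↔
      WellFormed s l₁ ∧ WellFormed s l₂ ∧ Disjoint (footprint s l₁) (footprint s l₂) := by
  simp only [WellFormed, List.mem_append, List.pairwise_append, Finset.disjoint_left,
    mem_footprint]
  constructor
  · rintro ⟨hle, hpw₁, hpw₂, hpw⟩
    refine ⟨⟨fun p hp => hle p (.inl hp), hpw₁⟩, ⟨fun p hp => hle p (.inr hp), hpw₂⟩, ?_⟩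
    rintro x ⟨p, hp, hp₁, hp₂⟩ ⟨q, hq, hq₁, hq₂⟩
    rcases hpw p hp q hq with h | h <;> omega
  · rintro ⟨⟨hle₁, hpw₁⟩, ⟨hle₂, hpw₂⟩, hdisj⟩
    refine ⟨fun p hp => hp.elim (hle₁ p) (hle₂ p), hpw₁, hpw₂, fun p hp q hq => ?_⟩
    by_contra h
    have := hle₁ p hp
    have := hle₂ q hq
    exact hdisj ⟨p, hp, le_max_left _ (q.1.eval s), by simp only [ArrDisjoint] at h; omega⟩
      ⟨q, hq, le_max_right _ _, by simp only [ArrDisjoint] at h; omega⟩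

theorem Spatial.nodup_addrs {F : Spatial} (h : F.absArrays.Pairwise (ArrDisjoint s)) :
    (F.ptos.map fun p => p.1.eval s).Nodup := by
  have := (F.absArrays_perm.pairwise_iff ArrDisjoint.symm).1 h
  rw [List.pairwise_append, List.pairwise_map] at this
  exact List.pairwise_map.2 (this.2.1.imp fun h => by simp only [ArrDisjoint] at h; omega)

theorem Spatial.arrDisjoint_of_mem_arrs_of_mem_ptos {F : Spatial}
    (h : F.absArrays.Pairwise (ArrDisjoint s)) {p r : Trm × Trm} (hp : p ∈ F.arrs)
    (hr : r ∈ F.ptos) : ArrDisjoint s p (r.1, r.1) :=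
  (List.pairwise_append.1 ((F.absArrays_perm.pairwise_iff ArrDisjoint.symm).1 h)).2.2 p hp _
    (List.mem_map_of_mem hr)

end WellFormed

theorem Spatial.sat_iff {s : Stack} {F : Spatial} {h : Heap} :
    F.sat s h ↔ WellFormed s F.absArrays ∧ h.keys = footprint s F.absArrays ∧
      ∀ p ∈ F.ptos, h.lookup (p.1.eval s) = some (p.2.eval s) := by
  induction F generalizing h with
  | emp =>
    simp [Spatial.sat, WellFormed, footprint, Spatial.absArrays, Spatial.ptos,
      Finmap.keys_eq_empty_iff]
  | pto t u => simp [Spatial.sat, WellFormed, footprint, Spatial.absArrays, Spatial.ptos]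
  | arr t u => simp [Spatial.sat, WellFormed, footprint, Spatial.absArrays, Spatial.ptos]
  | star F G ihF ihG =>
    simp only [Spatial.sat, ihF, ihG, Spatial.absArrays, Spatial.ptos, wellFormed_append,
      footprint_append, List.mem_append]
    constructor
    · rintro ⟨h₁, h₂, hdisj, rfl, ⟨hwf₁, hk₁, hl₁⟩, ⟨hwf₂, hk₂, hl₂⟩⟩
      refine ⟨⟨hwf₁, hwf₂, hk₁ ▸ hk₂ ▸ Finmap.disjoint_iff_disjoint_keys.1 hdisj⟩,
        by rw [Finmap.keys_union, hk₁, hk₂], fun p hp => ?_⟩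
      rcases hp with hp | hp
      · rw [Finmap.lookup_union_left (Finmap.mem_keys.1 (hk₁ ▸ Spatial.addr_mem_footprint hp)),
          hl₁ p hp]
      · rw [Finmap.lookup_union_right
          (hdisj _ · (Finmap.mem_keys.1 (hk₂ ▸ Spatial.addr_mem_footprint hp))), hl₂ p hp]
    · rintro ⟨⟨hwf₁, hwf₂, hdisj⟩, hk, hl⟩
      refine ⟨h.restrict (footprint s F.absArrays), h.restrict (footprint s G.absArrays),
        ?_, (Finmap.restrict_union_restrict hk.le).symm, ⟨hwf₁, ?_, fun p hp => ?_⟩,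
        ⟨hwf₂, ?_, fun p hp => ?_⟩⟩
      · rw [Finmap.disjoint_iff_disjoint_keys, Finmap.keys_restrict, Finmap.keys_restrict]
        exact (hdisj.mono_left Finset.inter_subset_left).mono_right Finset.inter_subset_left
      · rw [Finmap.keys_restrict, hk, Finset.inter_eq_left.2 Finset.subset_union_left]
      · rw [Finmap.lookup_restrict, if_pos (Spatial.addr_mem_footprint hp), hl p (.inl hp)]
      · rw [Finmap.keys_restrict, hk, Finset.inter_union_self]
      · rw [Finmap.lookup_restrict, if_pos (Spatial.addr_mem_footprint hp), hl p (.inr hp)]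

theorem SymHeap.sat_iff {s : Stack} {A : SymHeap} {h : Heap} :
    A.sat s h ↔ gammaSat A s ∧ h.keys = footprint s A.spatial.absArrays ∧
      ∀ p ∈ A.spatial.ptos, h.lookup (p.1.eval s) = some (p.2.eval s) := by
  rw [SymHeap.sat, Spatial.sat_iff, ← and_assoc]
  rfl

/-- The model of `F` under `s` in which every cell that is not a points-to address holds `v`. -/
def canonicalHeap (s : Stack) (v : ℕ) (F : Spatial) : Heap :=
  Finmap.ofFinset (footprint s F.absArrays) fun k =>
    ((F.ptos.find? fun p => p.1.eval s = k).map fun p => p.2.eval s).getD v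

section CanonicalHeap

variable {s : Stack} {v : ℕ} {F : Spatial}

theorem Spatial.sat_canonicalHeap (hwf : WellFormed s F.absArrays) :
    F.sat s (canonicalHeap s v F) := by
  refine Spatial.sat_iff.2 ⟨hwf, Finmap.keys_ofFinset _ _, fun p hp => ?_⟩
  rw [canonicalHeap, Finmap.lookup_ofFinset_of_mem _ (Spatial.addr_mem_footprint hp)]
  cases hfind : F.ptos.find? (fun r => r.1.eval s = p.1.eval s) with
  | none => exact absurd (List.find?_eq_none.1 hfind p hp) (by simp)
  | some r =>
    have hrp : r = p := List.inj_on_of_nodup_map (Spatial.nodup_addrs hwf.2)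
      (List.mem_of_find?_eq_some hfind) hp (by simpa using List.find?_some hfind)
    simp [hrp]

theorem lookup_canonicalHeap_of_mem_arrs (hwf : WellFormed s F.absArrays) {p : Trm × Trm}
    (hp : p ∈ F.arrs) {k : ℕ} (hk₁ : p.1.eval s ≤ k) (hk₂ : k ≤ p.2.eval s) :
    (canonicalHeap s v F).lookup k = some v := by
  have hk : k ∈ footprint s F.absArrays :=
    mem_footprint.2 ⟨p, Spatial.mem_absArrays.2 (.inl hp), hk₁, hk₂⟩
  have hnone : F.ptos.find? (fun r => r.1.eval s = k) = none := by
    refine List.find?_eq_none.2 fun r hr => ?_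
    have := Spatial.arrDisjoint_of_mem_arrs_of_mem_ptos hwf.2 hp hr
    simp only [ArrDisjoint] at this
    simp only [decide_eq_true_eq]
    omega
  rw [canonicalHeap, Finmap.lookup_ofFinset_of_mem _ hk, hnone]
  rfl

end CanonicalHeap

section SameHeap

variable {s : Stack} {h : Heap} {A B : SymHeap}

theorem not_phiSat_of_sat (hA : A.spatial.sat s h) (hB : B.spatial.sat s h) :
    ¬ phiSat A B s := by
  rw [phiSat_iff, ← (Spatial.sat_iff.1 hA).2.1, ← (Spatial.sat_iff.1 hB).2.1, not_not]

theorem not_psi2Sat_of_sat (hA : A.spatial.sat s h) (hB : B.spatial.sat s h) :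
    ¬ psi2Sat A B s := by
  rintro ⟨p, hp, q, hq, haddr, hne⟩
  have hlp := (Spatial.sat_iff.1 hA).2.2 p hp
  rw [haddr, (Spatial.sat_iff.1 hB).2.2 q hq] at hlp
  exact hne (Option.some_injective _ hlp).symm

theorem SymHeap.sat_of_not_phiSat_of_not_psiSat (hA : A.spatial.sat s h) (hγ : gammaSat B s)
    (hφ₁ : ¬ phiSat A B s) (hφ₂ : ¬ phiSat B A s) (hψ₁ : ¬ psi1Sat A B s)
    (hψ₂ : ¬ psi2Sat A B s) : B.sat s h := by
  obtain ⟨-, hk, hl⟩ := Spatial.sat_iff.1 hA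
  rw [phiSat_iff, not_not] at hφ₁ hφ₂
  have hfp := hφ₁.antisymm hφ₂
  refine SymHeap.sat_iff.2 ⟨hγ, hk.trans hfp, fun q hq => ?_⟩
  obtain ⟨e, he, he₁, he₂⟩ := mem_footprint.1 (hfp ▸ Spatial.addr_mem_footprint hq)
  rcases Spatial.mem_absArrays.1 he with he | ⟨r, hr, rfl⟩
  · exact absurd ⟨e, he, q, hq, he₁, he₂⟩ hψ₁
  · have haddr : r.1.eval s = q.1.eval s := le_antisymm he₁ he₂
    rw [← haddr, hl r hr]
    by_contra hne
    exact hψ₂ ⟨r, hr, q, hq, haddr, fun h => hne (congrArg some h)⟩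

end SameHeap

section Entailment

variable {A Q : SymHeap} {zs : List ℕ}

theorem entails_of_forall_not_chiSat (hzA : ∀ z ∈ zs, z ∉ A.vars)
    (hχ : ∀ s, ¬ chiSat A zs Q s) (s : Stack) (h : Heap) (hA : A.sat s h) :
    QSymHeap.sat s h ⟨zs, Q⟩ := by
  have hex : ¬ ∀ s' : Stack, (∀ x ∉ zs, s' x = s x) →
      (¬ gammaSat Q s' ∨ phiSat A Q s' ∨ phiSat Q A s' ∨ psi1Sat A Q s' ∨ psi2Sat A Q s') :=
    fun hall => hχ s ⟨(SymHeap.sat_iff.1 hA).1, hall⟩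
  push Not at hex
  obtain ⟨s', hag, hγ, hφ₁, hφ₂, hψ₁, hψ₂⟩ := hex
  have hA' : A.spatial.sat s' h :=
    (Spatial.sat_congr fun x hx => hag x fun hz => hzA x hz (.inr hx)).2 hA.2
  exact ⟨s', hag, SymHeap.sat_of_not_phiSat_of_not_psiSat hA' hγ hφ₁ hφ₂ hψ₁ hψ₂⟩

theorem not_chiSat_of_entails (hzA : ∀ z ∈ zs, z ∉ A.vars)
    (hw : ∀ p ∈ Q.spatial.ptos, ∀ z ∈ zs, z ∉ Trm.vars p.2)
    (hEnt : ∀ (s : Stack) (h : Heap), A.sat s h → QSymHeap.sat s h ⟨zs, Q⟩) (s : Stack) :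
    ¬ chiSat A zs Q s := by
  rintro ⟨hγA, hall⟩
  -- `v` exceeds every points-to value of `Q`, which `z⃗` cannot change
  set v := (Q.spatial.ptos.map fun q => q.2.eval s).sum + 1
  have hA := Spatial.sat_canonicalHeap (v := v) hγA.2
  obtain ⟨s', hag, hQ⟩ := hEnt s _ ⟨hγA.1, hA⟩
  have hagA : ∀ x ∈ A.spatial.vars, s' x = s x := fun x hx => hag x fun hz => hzA x hz (.inr hx)
  have hA' := (Spatial.sat_congr hagA).2 hA
  rcases hall s' hag with hγQ | hφ | hφ | ⟨p, hp, q, hq, hq₁, hq₂⟩ | hψ₂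
  · exact hγQ (SymHeap.sat_iff.1 hQ).1
  · exact not_phiSat_of_sat hA' hQ.2 hφ
  · exact not_phiSat_of_sat hQ.2 hA' hφ
  · obtain ⟨hp₁, hp₂⟩ := Spatial.eval_congr_of_mem_arrs hagA hp
    have hv := lookup_canonicalHeap_of_mem_arrs (v := v) hγA.2 hp (hp₁ ▸ hq₁) (hp₂ ▸ hq₂)
    rw [(SymHeap.sat_iff.1 hQ).2.2 q hq, Option.some_inj,
      Trm.eval_congr fun x hx => hag x fun hz => hw q hq x hz hx] at hv
    have := List.le_sum_of_mem (List.mem_map_of_mem (f := fun q => q.2.eval s) hq)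
    omega
  · exact not_psi2Sat_of_sat hA' hQ.2 hψ₂

end Entailment

/-- Entailment via Presburger arithmetic: let `A` be quantifier-free and
`B = ∃z⃗. Q`, with `z⃗` disjoint from the variables of `A` and no right-hand
side variable of a points-to in `Q` among `z⃗`. Then `A ⊨ B` iff the sentence
`∀x⃗. ¬χ(A,B)` is true over ℕ (universally quantifying all free variables,
i.e. over all stacks). -/
theorem stmt_18 (A : SymHeap) (zs : List ℕ) (Q : SymHeap)
    (hzA : ∀ z ∈ zs, z ∉ A.vars)
    (hw : ∀ p ∈ Q.spatial.ptos, ∀ z ∈ zs, z ∉ Trm.vars p.2) :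
    (∀ (s : Stack) (h : Heap), A.sat s h → QSymHeap.sat s h ⟨zs, Q⟩) ↔
    (∀ s : Stack, ¬ chiSat A zs Q s) :=
  ⟨not_chiSat_of_entails hzA hw, entails_of_forall_not_chiSat hzA⟩
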